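/- Fix integers e, f ≥ 1 and m, l ≥ 1, and vectors s = (s_1,…,s_e) ∈ ℝ^e and s' = (s'_1,…,s'_f) ∈ ℝ^f. For n ≥ 1 let ν_n be the probability measure on ℝ given by the uniform average, over all pairs (b, b') with b ∈ ℕ^e, ∑_{i=1}^e b_i = mn, and b' ∈ ℕ^f, ∑_{j=1}^f b'_j = ln, of the Dirac masses δ at the points (1/n)(∑_{i=1}^e b_i s_i + ∑_{j=1}^f b'_j s'_j). Let η be the probability measure on ℝ^e × ℝ^f proportional to the restriction to Δ × Δ' of the (e+f−2)-dimensional Hausdorff measure, and let φ : ℝ^e × ℝ^f → ℝ be the linear form (x, x') ↦ m∑_{i=1}^e s_i x_i + l∑_{j=1}^f s'_j x'_j. Then ν_n converges to the pushforward measure φ_*η in the topology of weak convergence of probability measures on ℝ as n → ∞. -/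

import Mathlib

/-!
Dropping the last coordinate maps the simplex `{x ∈ ℝ^(d+1) | x ≥ 0, ∑ xᵢ = 1}` bijectively onto
the solid simplex `{y ∈ ℝ^d | y ≥ 0, ∑ yᵢ ≤ 1}`, and its inverse extends to an injective affine
map `ψ`. The pullback of Hausdorff measure of the right dimension along an injective affine map is a
Haar measure, hence a multiple of Lebesgue measure, so `η` is the image of the normalized Lebesgue
measure on a product of two solid simplices.

On the discrete side, the tuples `b ∈ ℕ^(d+1)` with `∑ bᵢ = N` correspond in the same way to the
lattice points `c ∈ ℕ^d` with `∑ cᵢ ≤ N`, and the atom of `νₙ` at `b, b'` is `φ` evaluated at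
`(b / mn, b' / ln)`. Hence `∫ g dνₙ` is the average of `F = g ∘ φ ∘ (ψ × ψ)` over the points
`(c / mn, c' / ln)` of a product of two solid simplices, a normalized Riemann sum. Such a Riemann
sum is the integral of a step function supported in a fixed box, and these step functions converge
pointwise to `F` on the product of solid simplices and to `0` outside, so the sums converge by
dominated convergence.
-/

open MeasureTheory Filter Topology ProbabilityTheory Function Module Finset Finset.Nat
open scoped ENNReal NNReal

section Cond

variable {α β : Type*} [MeasurableSpace α] [MeasurableSpace β]

theorem ProbabilityTheory.cond_smul_measure {c : ℝ≥0∞} (hc₀ : c ≠ 0) (hc : c ≠ ∞)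
    (μ : Measure α) (s : Set α) : (c • μ)[|s] = μ[|s] := by
  rw [ProbabilityTheory.cond, ProbabilityTheory.cond, Measure.restrict_smul, smul_smul,
    Measure.smul_apply, smul_eq_mul, ENNReal.mul_inv (.inl hc₀) (.inl hc), mul_comm c⁻¹, mul_assoc,
    ENNReal.inv_mul_cancel hc₀ hc, mul_one]

theorem MeasurableEmbedding.map_cond_comap {f : α → β} (hf : MeasurableEmbedding f)
    (μ : Measure β) (s : Set α) : ((μ.comap f)[|s]).map f = μ[|f '' s] := by
  rw [ProbabilityTheory.cond, ProbabilityTheory.cond, Measure.map_smul, hf.comap_apply,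
    hf.restrict_comap, hf.map_comap, Measure.restrict_restrict hf.measurableSet_range,
    Set.inter_eq_right.mpr (Set.image_subset_range f s)]

end Cond

section HausdorffAffine

theorem AffineMap.image_preimage_add_left {k V W : Type*} [Ring k] [AddCommGroup V] [Module k V]
    [AddCommGroup W] [Module k W] (f : V →ᵃ[k] W) (t : V) (s : Set V) :
    f '' ((t + ·) ⁻¹' s) = (f.linear t + ·) ⁻¹' (f '' s) := by
  ext u
  constructor
  · rintro ⟨p, hp, rfl⟩
    exact ⟨t + p, hp, by simpa using f.map_vadd p t⟩
  · rintro ⟨q, hq, hqu⟩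
    refine ⟨-t + q, by simpa using hq, ?_⟩
    have := f.map_vadd q (-t)
    simp only [vadd_eq_add, map_neg] at this
    rw [this, hqu]
    exact neg_add_cancel_left _ _

variable {G E : Type*} [NormedAddCommGroup G] [NormedSpace ℝ G] [FiniteDimensional ℝ G]
  [MeasurableSpace G] [BorelSpace G] [NormedAddCommGroup E] [NormedSpace ℝ E]
  [MeasurableSpace E] [BorelSpace E]

theorem AffineMap.measurableEmbedding_of_injective (f : G →ᵃ[ℝ] E) (hf : Injective f) :
    MeasurableEmbedding f := by
  obtain ⟨K, hK⟩ := f.antilipschitzWith_of_finiteDimensional hf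
  obtain ⟨C, hC⟩ := f.lipschitzWith_of_finiteDimensional
  exact (hK.isClosedEmbedding hC.uniformContinuous).measurableEmbedding

theorem AffineMap.isAddHaarMeasure_comap_hausdorffMeasure (f : G →ᵃ[ℝ] E) (hf : Injective f) :
    ((μH[finrank ℝ G] : Measure E).comap f).IsAddHaarMeasure := by
  have hfm := f.measurableEmbedding_of_injective hf
  obtain ⟨C, hC⟩ := f.lipschitzWith_of_finiteDimensional
  obtain ⟨K, hK⟩ := f.antilipschitzWith_of_finiteDimensional hf
  exact
  { lt_top_of_isCompact := fun L hL => by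
      rw [hfm.comap_apply]
      exact (hC.hausdorffMeasure_image_le (by positivity) L).trans_lt
        (ENNReal.mul_lt_top (by simp) hL.measure_lt_top)
    map_add_left_eq_self := fun t => by
      ext s hs
      rw [Measure.map_apply (measurable_const_add t) hs, hfm.comap_apply, hfm.comap_apply,
        f.image_preimage_add_left, measure_preimage_add]
    open_pos := fun U hU hne h0 => by
      rw [hfm.comap_apply] at h0
      have := hK.le_hausdorffMeasure_image (d := finrank ℝ G) (Nat.cast_nonneg _) U
      rw [h0, mul_zero, nonpos_iff_eq_zero] at this
      exact (hU.measure_pos _ hne).ne' this }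

theorem AffineMap.hausdorffMeasure_cond_image (f : G →ᵃ[ℝ] E) (hf : Injective f) (μ : Measure G)
    [μ.IsAddHaarMeasure] (s : Set G) :
    (μH[finrank ℝ G] : Measure E)[|f '' s] = (μ[|s]).map f := by
  have := f.isAddHaarMeasure_comap_hausdorffMeasure hf
  rw [← (f.measurableEmbedding_of_injective hf).map_cond_comap,
    Measure.isAddLeftInvariant_eq_smul (μH[finrank ℝ G].comap f) μ, ENNReal.smul_def,
    cond_smul_measure
      (by simpa using (Measure.addHaarScalarFactor_pos_of_isAddHaarMeasure _ μ).ne')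
      ENNReal.coe_ne_top]

end HausdorffAffine

section SolidSimplex

variable (d : ℕ)

def solidSimplex : Set (Fin d → ℝ) := {y | (∀ i, 0 ≤ y i) ∧ ∑ i, y i ≤ 1}

theorem isCompact_solidSimplex : IsCompact (solidSimplex d) := by
  have hclosed : IsClosed ({y : Fin d → ℝ | ∀ i, 0 ≤ y i} ∩ {y | ∑ i, y i ≤ 1}) := by
    refine IsClosed.inter ?_ (isClosed_le (by fun_prop) continuous_const)
    simp only [Set.ofPred_forall]
    exact isClosed_iInter fun i => isClosed_le continuous_const (continuous_apply i)
  refine (isCompact_univ_pi fun _ => isCompact_Icc (a := (0 : ℝ)) (b := 1)).of_isClosed_subset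
    hclosed fun y hy i _ => ⟨hy.1 i, ?_⟩
  exact (Finset.single_le_sum (fun j _ => hy.1 j) (Finset.mem_univ i)).trans hy.2

theorem volume_solidSimplex_pos : 0 < volume (solidSimplex d) := by
  set ε : ℝ := ((d : ℝ) + 1)⁻¹
  have hε : 0 < ε := by positivity
  refine ((isOpen_set_pi Set.finite_univ fun _ _ => isOpen_Ioo).measure_pos volume
    ⟨fun _ => ε / 2, fun i _ => ⟨half_pos hε, half_lt_self hε⟩⟩).trans_le (measure_mono ?_)
  intro y hy
  refine ⟨fun i => (hy i trivial).1.le, ?_⟩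
  calc ∑ i, y i ≤ ∑ _i : Fin d, ε := Finset.sum_le_sum fun i _ => (hy i trivial).2.le
    _ = d / (d + 1) := by simp [ε, div_eq_mul_inv]
    _ ≤ 1 := (div_le_one (by positivity)).mpr (by linarith)

end SolidSimplex

section SimplexChart

variable (d : ℕ)

def snocNegSum : (Fin d → ℝ) →ₗ[ℝ] EuclideanSpace ℝ (Fin (d + 1)) where
  toFun y := WithLp.toLp 2 (Fin.snoc y (-∑ i, y i))
  map_add' y z := by
    ext i
    refine Fin.lastCases ?_ (fun j => ?_) i
    · simp [Finset.sum_add_distrib, add_comm]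
    · simp
  map_smul' c y := by
    ext i
    refine Fin.lastCases ?_ (fun j => ?_) i
    · simp [Finset.mul_sum]
    · simp

def simplexChart : (Fin d → ℝ) →ᵃ[ℝ] EuclideanSpace ℝ (Fin (d + 1)) where
  toFun y := WithLp.toLp 2 (Fin.snoc y (1 - ∑ i, y i))
  linear := snocNegSum d
  map_vadd' y v := by
    ext i
    refine Fin.lastCases ?_ (fun j => ?_) i
    · simp [snocNegSum, Finset.sum_add_distrib]
      ring
    · simp [snocNegSum]

variable {d}

theorem simplexChart_apply (y : Fin d → ℝ) :
    simplexChart d y = WithLp.toLp 2 (Fin.snoc y (1 - ∑ i, y i)) := rfl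

theorem simplexChart_injective : Injective (simplexChart d) := fun y z h => by
  funext i
  simpa [simplexChart_apply] using congrArg (· (Fin.castSucc i)) h

theorem image_simplexChart_solidSimplex :
    simplexChart d '' solidSimplex d = {x | (∀ i, 0 ≤ x i) ∧ ∑ i, x i = 1} := by
  ext x
  constructor
  · rintro ⟨y, ⟨hy₀, hy₁⟩, rfl⟩
    refine ⟨fun i => ?_, by simp [simplexChart_apply, Fin.sum_univ_castSucc]⟩
    refine Fin.lastCases ?_ (fun j => ?_) i
    · simpa [simplexChart_apply] using hy₁
    · simpa [simplexChart_apply] using hy₀ j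
  · rintro ⟨hx₀, hx₁⟩
    rw [Fin.sum_univ_castSucc] at hx₁
    refine ⟨Fin.init x, ⟨fun i => hx₀ _, ?_⟩, ?_⟩
    · simp only [Fin.init]
      linarith [hx₀ (Fin.last d)]
    · ext i
      refine Fin.lastCases ?_ (fun j => ?_) i
      · simp only [simplexChart_apply, Fin.snoc_last, Fin.init]
        linarith
      · simp [simplexChart_apply, Fin.init]

end SimplexChart

theorem hausdorffMeasure_cond_simplex_prod_eq_map (d₁ d₂ : ℕ) :
    (μH[((d₁ + 1 : ℕ) : ℝ) + ((d₂ + 1 : ℕ) : ℝ) - 2] :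
        Measure (EuclideanSpace ℝ (Fin (d₁ + 1)) × EuclideanSpace ℝ (Fin (d₂ + 1))))[|
          {x | (∀ i, 0 ≤ x i) ∧ ∑ i, x i = 1} ×ˢ {x | (∀ j, 0 ≤ x j) ∧ ∑ j, x j = 1}] =
      (volume[|solidSimplex d₁ ×ˢ solidSimplex d₂]).map
        ((simplexChart d₁).prodMap (simplexChart d₂)) := by
  have hdim : ((d₁ + 1 : ℕ) : ℝ) + ((d₂ + 1 : ℕ) : ℝ) - 2 =
      finrank ℝ ((Fin d₁ → ℝ) × (Fin d₂ → ℝ)) := by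
    simp only [finrank_prod, finrank_fin_fun]
    push_cast
    ring
  have : (volume : Measure ((Fin d₁ → ℝ) × (Fin d₂ → ℝ))).IsAddHaarMeasure := by
    rw [Measure.volume_eq_prod]
    exact Measure.prod.instIsAddHaarMeasure _ _
  rw [hdim, ← image_simplexChart_solidSimplex, ← image_simplexChart_solidSimplex,
    ← Set.prodMap_image_prod, ← AffineMap.coe_prodMap]
  exact AffineMap.hausdorffMeasure_cond_image _
    (simplexChart_injective.prodMap simplexChart_injective) _ _

section Lattice

variable {d N : ℕ}

def solidSimplexLattice (d N : ℕ) : Finset (Fin d → ℕ) :=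
  (Fintype.piFinset fun _ => Finset.range (N + 1)).filter (∑ i, · i ≤ N)

theorem mem_solidSimplexLattice {c : Fin d → ℕ} :
    c ∈ solidSimplexLattice d N ↔ ∑ i, c i ≤ N := by
  refine ⟨fun h => (Finset.mem_filter.mp h).2, fun h => Finset.mem_filter.mpr ⟨?_, h⟩⟩
  refine Fintype.mem_piFinset.mpr fun i => Finset.mem_range_succ_iff.mpr ?_
  exact (Finset.single_le_sum (fun j _ => Nat.zero_le _) (Finset.mem_univ i)).trans h

noncomputable def gridPoint (N : ℕ) (c : Fin d → ℕ) : Fin d → ℝ := fun i => c i / N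

noncomputable def gridIndex (N : ℕ) (z : Fin d → ℝ) : Fin d → ℕ := fun i => ⌊z i * N⌋₊

def gridCell (N : ℕ) (c : Fin d → ℕ) : Set (Fin d → ℝ) :=
  Set.univ.pi fun i => Set.Ico ((c i : ℝ) / N) ((c i + 1) / N)

theorem measurableSet_gridCell (N : ℕ) (c : Fin d → ℕ) : MeasurableSet (gridCell N c) :=
  .univ_pi fun _ => measurableSet_Ico

theorem volume_gridCell (N : ℕ) (c : Fin d → ℕ) :
    volume (gridCell N c) = ENNReal.ofReal ((N : ℝ)⁻¹) ^ d := by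
  simp [gridCell, volume_pi_pi, Real.volume_Ico, ← sub_div]

theorem mem_gridCell_iff (hN : 0 < N) {c : Fin d → ℕ} {z : Fin d → ℝ} :
    z ∈ gridCell N c ↔ (∀ i, 0 ≤ z i) ∧ gridIndex N z = c := by
  have hN' : (0 : ℝ) < N := Nat.cast_pos.mpr hN
  simp only [gridCell, Set.mem_univ_pi, Set.mem_Ico, div_le_iff₀ hN', lt_div_iff₀ hN',
    funext_iff, gridIndex]
  refine ⟨fun h => ⟨fun i => ?_, fun i => ?_⟩, fun ⟨h₀, h⟩ i => ?_⟩
  · exact (mul_nonneg_iff_of_pos_right hN').mp ((Nat.cast_nonneg _).trans (h i).1)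
  · exact (Nat.floor_eq_iff ((Nat.cast_nonneg _).trans (h i).1)).mpr (h i)
  · exact (Nat.floor_eq_iff (mul_nonneg (h₀ i) hN'.le)).mp (h i)

theorem gridIndex_mem_solidSimplexLattice {z : Fin d → ℝ} (hz : z ∈ solidSimplex d) :
    gridIndex N z ∈ solidSimplexLattice d N := by
  refine mem_solidSimplexLattice.mpr (Nat.cast_le (α := ℝ) |>.mp ?_)
  calc ((∑ i, gridIndex N z i : ℕ) : ℝ) ≤ ∑ i, z i * N := by
        push_cast
        exact Finset.sum_le_sum fun i _ => Nat.floor_le (mul_nonneg (hz.1 i) (Nat.cast_nonneg _))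
    _ ≤ N := by
        rw [← Finset.sum_mul]
        exact mul_le_of_le_one_left (Nat.cast_nonneg _) hz.2

theorem mul_le_of_mem_gridCell (hN : 0 < N) {c : Fin d → ℕ} {z : Fin d → ℝ}
    (hz : z ∈ gridCell N c) (i : Fin d) : z i * N ≤ c i + 1 := by
  obtain ⟨-, rfl⟩ := (mem_gridCell_iff hN).mp hz
  exact (Nat.lt_floor_add_one _).le

theorem sum_le_of_mem_gridCell (hN : 0 < N) {c : Fin d → ℕ} (hc : c ∈ solidSimplexLattice d N)
    {z : Fin d → ℝ} (hz : z ∈ gridCell N c) : ∑ i, z i ≤ 1 + d / N := by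
  have hN' : (0 : ℝ) < N := Nat.cast_pos.mpr hN
  have hc' : (∑ i, c i : ℝ) ≤ N := by exact_mod_cast mem_solidSimplexLattice.mp hc
  rw [← sub_le_iff_le_add', le_div_iff₀ hN', sub_mul, one_mul, Finset.sum_mul]
  have := Finset.sum_le_sum fun i (_ : i ∈ Finset.univ) => mul_le_of_mem_gridCell hN hz i
  simp only [Finset.sum_add_distrib, Finset.sum_const, Finset.card_univ, Fintype.card_fin,
    nsmul_one] at this
  linarith

theorem gridCell_subset_Icc (hN : 0 < N) {c : Fin d → ℕ} (hc : c ∈ solidSimplexLattice d N) :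
    gridCell N c ⊆ Set.univ.pi fun _ => Set.Icc 0 2 := by
  intro z hz i _
  have hN' : (1 : ℝ) ≤ N := Nat.one_le_cast.mpr hN
  have hci : (c i : ℝ) ≤ N := by
    exact_mod_cast (Finset.single_le_sum (fun j _ => Nat.zero_le (c j)) (Finset.mem_univ i)).trans
      (mem_solidSimplexLattice.mp hc)
  refine ⟨((mem_gridCell_iff hN).mp hz).1 i,
    le_of_mul_le_mul_right ?_ (by positivity : (0 : ℝ) < N)⟩
  linarith [mul_le_of_mem_gridCell hN hz i]

theorem tendsto_gridPoint_gridIndex {N : ℕ → ℕ} (hN : Tendsto N atTop atTop) {z : Fin d → ℝ}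
    (hz : ∀ i, 0 ≤ z i) :
    Tendsto (fun n => gridPoint (N n) (gridIndex (N n) z)) atTop (𝓝 z) :=
  tendsto_pi_nhds.mpr fun i =>
    (tendsto_nat_floor_mul_div_atTop (hz i)).comp (tendsto_natCast_atTop_atTop.comp hN)

theorem eventually_notMem_gridCell {N : ℕ → ℕ} (hN : Tendsto N atTop atTop) {z : Fin d → ℝ}
    (hz : z ∉ solidSimplex d) :
    ∀ᶠ n in atTop, ∀ c ∈ solidSimplexLattice d (N n), z ∉ gridCell (N n) c := by
  by_cases h₀ : ∀ i, 0 ≤ z i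
  · have h₁ : 1 < ∑ i, z i := lt_of_not_ge fun h => hz ⟨h₀, h⟩
    have hd : Tendsto (fun n => (d : ℝ) / N n) atTop (𝓝 0) :=
      (tendsto_const_div_atTop_nhds_zero_nat _).comp hN
    filter_upwards [hN.eventually_gt_atTop 0, hd.eventually (gt_mem_nhds (sub_pos.mpr h₁))]
      with n hn hdn c hc hzc
    linarith [sum_le_of_mem_gridCell hn hc hzc]
  · filter_upwards [hN.eventually_gt_atTop 0] with n hn c _ hzc
    exact h₀ ((mem_gridCell_iff hn).mp hzc).1

end Lattice

section RiemannSum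

variable {d₁ d₂ : ℕ} (F : (Fin d₁ → ℝ) × (Fin d₂ → ℝ) → ℝ)

noncomputable def riemannStep (N₁ N₂ : ℕ) (y : (Fin d₁ → ℝ) × (Fin d₂ → ℝ)) : ℝ :=
  ∑ p ∈ solidSimplexLattice d₁ N₁ ×ˢ solidSimplexLattice d₂ N₂,
    (gridCell N₁ p.1 ×ˢ gridCell N₂ p.2).indicator
      (fun _ => F (gridPoint N₁ p.1, gridPoint N₂ p.2)) y

theorem integral_riemannStep (N₁ N₂ : ℕ) :
    ∫ y, riemannStep F N₁ N₂ y = ((N₁ : ℝ)⁻¹ ^ d₁ * (N₂ : ℝ)⁻¹ ^ d₂) *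
      ∑ p ∈ solidSimplexLattice d₁ N₁ ×ˢ solidSimplexLattice d₂ N₂,
        F (gridPoint N₁ p.1, gridPoint N₂ p.2) := by
  have hcell (p : (Fin d₁ → ℕ) × (Fin d₂ → ℕ)) :
      MeasurableSet (gridCell N₁ p.1 ×ˢ gridCell N₂ p.2) :=
    (measurableSet_gridCell N₁ p.1).prod (measurableSet_gridCell N₂ p.2)
  have hvol (p : (Fin d₁ → ℕ) × (Fin d₂ → ℕ)) :
      volume (gridCell N₁ p.1 ×ˢ gridCell N₂ p.2) =
        ENNReal.ofReal ((N₁ : ℝ)⁻¹) ^ d₁ * ENNReal.ofReal ((N₂ : ℝ)⁻¹) ^ d₂ := by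
    rw [Measure.volume_eq_prod, Measure.prod_prod, volume_gridCell, volume_gridCell]
  unfold riemannStep
  rw [integral_finsetSum _ fun p _ => (integrable_indicator_iff (hcell p)).mpr
    (integrableOn_const (by simp [hvol, ENNReal.mul_eq_top]))]
  rw [Finset.mul_sum]
  refine Finset.sum_congr rfl fun p _ => ?_
  rw [integral_indicator_const _ (hcell p), measureReal_def, hvol, smul_eq_mul]
  simp [ENNReal.toReal_ofReal]

variable {F}

theorem riemannStep_eq_of_mem {N₁ N₂ : ℕ} (hN₁ : 0 < N₁) (hN₂ : 0 < N₂)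
    {p : (Fin d₁ → ℕ) × (Fin d₂ → ℕ)}
    (hp : p ∈ solidSimplexLattice d₁ N₁ ×ˢ solidSimplexLattice d₂ N₂)
    {y : (Fin d₁ → ℝ) × (Fin d₂ → ℝ)} (hy : y ∈ gridCell N₁ p.1 ×ˢ gridCell N₂ p.2) :
    riemannStep F N₁ N₂ y = F (gridPoint N₁ p.1, gridPoint N₂ p.2) := by
  refine (Finset.sum_eq_single_of_mem p hp fun q _ hqp => ?_).trans (Set.indicator_of_mem hy _)
  refine Set.indicator_of_notMem (fun hyq => hqp (Prod.ext ?_ ?_)) _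
  · exact ((mem_gridCell_iff hN₁).mp hyq.1).2.symm.trans ((mem_gridCell_iff hN₁).mp hy.1).2
  · exact ((mem_gridCell_iff hN₂).mp hyq.2).2.symm.trans ((mem_gridCell_iff hN₂).mp hy.2).2

theorem riemannStep_eq_zero {N₁ N₂ : ℕ} {y : (Fin d₁ → ℝ) × (Fin d₂ → ℝ)}
    (hy : ∀ p ∈ solidSimplexLattice d₁ N₁ ×ˢ solidSimplexLattice d₂ N₂,
      y ∉ gridCell N₁ p.1 ×ˢ gridCell N₂ p.2) :
    riemannStep F N₁ N₂ y = 0 :=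
  Finset.sum_eq_zero fun p hp => Set.indicator_of_notMem (hy p hp) _

theorem norm_riemannStep_le {C : ℝ} (hC : ∀ y, ‖F y‖ ≤ C) {N₁ N₂ : ℕ} (hN₁ : 0 < N₁)
    (hN₂ : 0 < N₂) (y : (Fin d₁ → ℝ) × (Fin d₂ → ℝ)) :
    ‖riemannStep F N₁ N₂ y‖ ≤ ((Set.univ.pi fun _ => Set.Icc 0 2) ×ˢ
      (Set.univ.pi fun _ => Set.Icc 0 2)).indicator (fun _ => C) y := by
  by_cases hy : ∃ p ∈ solidSimplexLattice d₁ N₁ ×ˢ solidSimplexLattice d₂ N₂,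
      y ∈ gridCell N₁ p.1 ×ˢ gridCell N₂ p.2
  · obtain ⟨p, hp, hyp⟩ := hy
    obtain ⟨hp₁, hp₂⟩ := Finset.mem_product.mp hp
    rw [riemannStep_eq_of_mem hN₁ hN₂ hp hyp, Set.indicator_of_mem (Set.mem_prod.mpr
      ⟨gridCell_subset_Icc hN₁ hp₁ hyp.1, gridCell_subset_Icc hN₂ hp₂ hyp.2⟩)]
    exact hC _
  · simp only [not_exists, not_and] at hy
    rw [riemannStep_eq_zero hy, norm_zero]
    exact Set.indicator_nonneg (fun _ _ => (norm_nonneg _).trans (hC 0)) y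

variable {N₁ N₂ : ℕ → ℕ}

theorem tendsto_riemannStep (hF : Continuous F) (h₁ : Tendsto N₁ atTop atTop)
    (h₂ : Tendsto N₂ atTop atTop) (y : (Fin d₁ → ℝ) × (Fin d₂ → ℝ)) :
    Tendsto (fun n => riemannStep F (N₁ n) (N₂ n) y) atTop
      (𝓝 ((solidSimplex d₁ ×ˢ solidSimplex d₂).indicator F y)) := by
  by_cases hy : y ∈ solidSimplex d₁ ×ˢ solidSimplex d₂
  · rw [Set.indicator_of_mem hy]
    have hlim := (hF.tendsto y).comp ((tendsto_gridPoint_gridIndex h₁ hy.1.1).prodMk_nhds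
      (tendsto_gridPoint_gridIndex h₂ hy.2.1))
    refine hlim.congr' ?_
    filter_upwards [h₁.eventually_gt_atTop 0, h₂.eventually_gt_atTop 0] with n hn₁ hn₂
    refine (riemannStep_eq_of_mem hn₁ hn₂ (p := (gridIndex (N₁ n) y.1, gridIndex (N₂ n) y.2))
      (Finset.mem_product.mpr
      ⟨gridIndex_mem_solidSimplexLattice hy.1, gridIndex_mem_solidSimplexLattice hy.2⟩)
      ⟨(mem_gridCell_iff hn₁).mpr ⟨hy.1.1, rfl⟩, (mem_gridCell_iff hn₂).mpr ⟨hy.2.1, rfl⟩⟩).symm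
  · rw [Set.indicator_of_notMem hy]
    refine tendsto_const_nhds.congr' ?_
    rw [Set.mem_prod, not_and_or] at hy
    rcases hy with hy | hy
    · filter_upwards [eventually_notMem_gridCell h₁ hy] with n hn
      exact (riemannStep_eq_zero fun p hp hyp =>
        hn p.1 (Finset.mem_product.mp hp).1 hyp.1).symm
    · filter_upwards [eventually_notMem_gridCell h₂ hy] with n hn
      exact (riemannStep_eq_zero fun p hp hyp =>
        hn p.2 (Finset.mem_product.mp hp).2 hyp.2).symm

end RiemannSum

section RiemannLimit

variable {d₁ d₂ : ℕ} {F : (Fin d₁ → ℝ) × (Fin d₂ → ℝ) → ℝ} {N₁ N₂ : ℕ → ℕ}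

theorem tendsto_riemannSum (hF : Continuous F) {C : ℝ} (hC : ∀ y, ‖F y‖ ≤ C)
    (h₁ : Tendsto N₁ atTop atTop) (h₂ : Tendsto N₂ atTop atTop) :
    Tendsto (fun n => ((N₁ n : ℝ)⁻¹ ^ d₁ * (N₂ n : ℝ)⁻¹ ^ d₂) *
      ∑ p ∈ solidSimplexLattice d₁ (N₁ n) ×ˢ solidSimplexLattice d₂ (N₂ n),
        F (gridPoint (N₁ n) p.1, gridPoint (N₂ n) p.2)) atTop
      (𝓝 (∫ y in solidSimplex d₁ ×ˢ solidSimplex d₂, F y)) := by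
  have hbox : IsCompact ((Set.univ.pi fun _ : Fin d₁ => Set.Icc (0 : ℝ) 2) ×ˢ
      (Set.univ.pi fun _ : Fin d₂ => Set.Icc (0 : ℝ) 2)) :=
    (isCompact_univ_pi fun _ => isCompact_Icc).prod (isCompact_univ_pi fun _ => isCompact_Icc)
  have hlim := tendsto_integral_filter_of_dominated_convergence (μ := volume)
    (F := fun n => riemannStep F (N₁ n) (N₂ n)) _
    (.of_forall fun n => (Finset.measurable_sum _ fun p _ => measurable_const.indicator
      ((measurableSet_gridCell _ _).prod (measurableSet_gridCell _ _))).aestronglyMeasurable)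
    (by filter_upwards [h₁.eventually_gt_atTop 0, h₂.eventually_gt_atTop 0] with n hn₁ hn₂
        exact .of_forall (norm_riemannStep_le hC hn₁ hn₂))
    ((integrable_indicator_iff hbox.measurableSet).mpr (integrableOn_const hbox.measure_lt_top.ne))
    (.of_forall (tendsto_riemannStep hF h₁ h₂))
  rw [integral_indicator ((isCompact_solidSimplex d₁).measurableSet.prod
    (isCompact_solidSimplex d₂).measurableSet)] at hlim
  simpa only [integral_riemannStep] using hlim

theorem tendsto_average_solidSimplexLattice (hF : Continuous F) {C : ℝ} (hC : ∀ y, ‖F y‖ ≤ C)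
    (h₁ : Tendsto N₁ atTop atTop) (h₂ : Tendsto N₂ atTop atTop) :
    Tendsto (fun n =>
      (#(solidSimplexLattice d₁ (N₁ n) ×ˢ solidSimplexLattice d₂ (N₂ n)) : ℝ)⁻¹ *
      ∑ p ∈ solidSimplexLattice d₁ (N₁ n) ×ˢ solidSimplexLattice d₂ (N₂ n),
        F (gridPoint (N₁ n) p.1, gridPoint (N₂ n) p.2)) atTop
      (𝓝 (∫ y, F y ∂volume[|solidSimplex d₁ ×ˢ solidSimplex d₂])) := by
  have hvol : volume.real (solidSimplex d₁ ×ˢ solidSimplex d₂) ≠ 0 := by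
    rw [measureReal_def, Measure.volume_eq_prod, Measure.prod_prod]
    exact ENNReal.toReal_ne_zero.mpr ⟨mul_ne_zero (volume_solidSimplex_pos d₁).ne'
      (volume_solidSimplex_pos d₂).ne', ENNReal.mul_ne_top
      (isCompact_solidSimplex d₁).measure_lt_top.ne (isCompact_solidSimplex d₂).measure_lt_top.ne⟩
  have hcount := tendsto_riemannSum (d₁ := d₁) (d₂ := d₂) (F := fun _ => (1 : ℝ)) continuous_const
    (fun _ => norm_one.le) h₁ h₂
  rw [setIntegral_const, smul_eq_mul, mul_one] at hcount
  rw [ProbabilityTheory.cond, integral_smul_measure, ENNReal.toReal_inv, smul_eq_mul,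
    ← measureReal_def, ← div_eq_inv_mul]
  refine ((tendsto_riemannSum hF hC h₁ h₂).div hcount hvol).congr' ?_
  filter_upwards [h₁.eventually_gt_atTop 0, h₂.eventually_gt_atTop 0] with n hn₁ hn₂
  rw [Pi.div_apply, Finset.sum_const, nsmul_one, mul_div_mul_left _ _ (by positivity),
    div_eq_inv_mul]

end RiemannLimit

section Reindex

variable {d N : ℕ}

theorem gridPoint_snoc (c : Fin d → ℕ) (a : ℕ) :
    gridPoint N (Fin.snoc c a : Fin (d + 1) → ℕ) = Fin.snoc (gridPoint N c) (a / N : ℝ) := by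
  ext i
  refine Fin.lastCases ?_ (fun j => ?_) i <;> simp [gridPoint]

theorem simplexChart_gridPoint (hN : N ≠ 0) {c : Fin d → ℕ} (hc : c ∈ solidSimplexLattice d N) :
    simplexChart d (gridPoint N c) =
      WithLp.toLp 2 (gridPoint N (Fin.snoc c (N - ∑ i, c i) : Fin (d + 1) → ℕ)) := by
  rw [simplexChart_apply, gridPoint_snoc, Nat.cast_sub (mem_solidSimplexLattice.mp hc)]
  congr 3
  rw [sub_div, div_self (Nat.cast_ne_zero.mpr hN : (N : ℝ) ≠ 0)]
  simp only [gridPoint, Nat.cast_sum, Finset.sum_div]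

theorem sum_antidiagonalTuple_succ {M : Type*} [AddCommMonoid M] (hN : N ≠ 0)
    (G : EuclideanSpace ℝ (Fin (d + 1)) → M) :
    ∑ b ∈ antidiagonalTuple (d + 1) N, G (WithLp.toLp 2 (gridPoint N b)) =
      ∑ c ∈ solidSimplexLattice d N, G (simplexChart d (gridPoint N c)) := by
  symm
  refine Finset.sum_nbij' (fun c => Fin.snoc c (N - ∑ i, c i)) Fin.init (fun c hc => ?_)
    (fun b hb => ?_) (fun c _ => Fin.init_snoc _ _) (fun b hb => ?_)
    (fun c hc => by rw [simplexChart_gridPoint hN hc])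
  · have := mem_solidSimplexLattice.mp hc
    simp only [mem_antidiagonalTuple, Fin.sum_univ_castSucc, Fin.snoc_castSucc,
      Fin.snoc_last]
    omega
  · rw [mem_antidiagonalTuple, Fin.sum_univ_castSucc] at hb
    exact mem_solidSimplexLattice.mpr (by simp only [Fin.init]; omega)
  · rw [mem_antidiagonalTuple, Fin.sum_univ_castSucc] at hb
    conv_rhs => rw [← Fin.snoc_init_self b]
    congr 1
    simp only [Fin.init]
    omega

theorem average_antidiagonalTuple_prod {d₁ d₂ N₁ N₂ : ℕ} (hN₁ : N₁ ≠ 0) (hN₂ : N₂ ≠ 0)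
    (G : EuclideanSpace ℝ (Fin (d₁ + 1)) × EuclideanSpace ℝ (Fin (d₂ + 1)) → ℝ) :
    (#(antidiagonalTuple (d₁ + 1) N₁ ×ˢ antidiagonalTuple (d₂ + 1) N₂) : ℝ)⁻¹ *
      ∑ p ∈ antidiagonalTuple (d₁ + 1) N₁ ×ˢ antidiagonalTuple (d₂ + 1) N₂,
        G (WithLp.toLp 2 (gridPoint N₁ p.1), WithLp.toLp 2 (gridPoint N₂ p.2)) =
    (#(solidSimplexLattice d₁ N₁ ×ˢ solidSimplexLattice d₂ N₂) : ℝ)⁻¹ *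
      ∑ q ∈ solidSimplexLattice d₁ N₁ ×ˢ solidSimplexLattice d₂ N₂,
        G ((simplexChart d₁).prodMap (simplexChart d₂) (gridPoint N₁ q.1, gridPoint N₂ q.2)) := by
  have hsum (G : EuclideanSpace ℝ (Fin (d₁ + 1)) × EuclideanSpace ℝ (Fin (d₂ + 1)) → ℝ) :
      ∑ p ∈ antidiagonalTuple (d₁ + 1) N₁ ×ˢ antidiagonalTuple (d₂ + 1) N₂,
        G (WithLp.toLp 2 (gridPoint N₁ p.1), WithLp.toLp 2 (gridPoint N₂ p.2)) =
      ∑ q ∈ solidSimplexLattice d₁ N₁ ×ˢ solidSimplexLattice d₂ N₂,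
        G ((simplexChart d₁).prodMap (simplexChart d₂) (gridPoint N₁ q.1, gridPoint N₂ q.2)) := by
    simp only [Finset.sum_product, AffineMap.prodMap_apply]
    rw [sum_antidiagonalTuple_succ hN₁ fun u => ∑ b ∈ antidiagonalTuple (d₂ + 1) N₂,
      G (u, WithLp.toLp 2 (gridPoint N₂ b))]
    exact Finset.sum_congr rfl fun c _ =>
      sum_antidiagonalTuple_succ hN₂ fun v => G (simplexChart d₁ (gridPoint N₁ c), v)
  rw [Finset.cast_card, Finset.cast_card, hsum, hsum fun _ => 1]

end Reindex

theorem integral_inv_card_smul_sum_dirac {ι α E : Type*} [MeasurableSpace α]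
    [MeasurableSingletonClass α] [NormedAddCommGroup E] [NormedSpace ℝ E] [CompleteSpace E]
    (s : Finset ι) (x : ι → α) (g : α → E) :
    ∫ a, g a ∂((#s : ℝ≥0∞)⁻¹ • ∑ i ∈ s, Measure.dirac (x i)) = (#s : ℝ)⁻¹ • ∑ i ∈ s, g (x i) := by
  rw [integral_smul_measure, integral_finsetSum_measure fun i _ => integrable_dirac (by simp),
    ENNReal.toReal_inv, ENNReal.toReal_natCast]
  simp only [integral_dirac]

theorem mul_sum_mul_gridPoint {d k : ℕ} (hk : k ≠ 0) (n : ℕ) (s : Fin d → ℝ) (b : Fin d → ℕ) :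
    (k : ℝ) * ∑ i, s i * gridPoint (k * n) b i = (∑ i, (b i : ℝ) * s i) / n := by
  simp only [gridPoint, Finset.mul_sum, Finset.sum_div]
  refine Finset.sum_congr rfl fun i _ => ?_
  rcases eq_or_ne n 0 with rfl | hn
  · simp
  · push_cast
    field_simp

/-- The probability measures `ν_n`, given by the uniform average over all pairs
`(b, b')` with `b ∈ ℕ^e`, `∑ bᵢ = mn` and `b' ∈ ℕ^f`, `∑ b'ⱼ = ln` of the Dirac
masses at `(∑ bᵢ sᵢ + ∑ b'ⱼ s'ⱼ)/n`, converge weakly, as `n → ∞`, to the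
pushforward under `φ(x, x') = m ∑ sᵢ xᵢ + l ∑ s'ⱼ x'ⱼ` of the normalized Lebesgue
measure `η` on the product of standard simplices `Δ × Δ' ⊆ ℝ^e × ℝ^f` (the
probability measure proportional to the restriction to `Δ × Δ'` of the
`(e+f-2)`-dimensional Hausdorff measure). -/
theorem tensor_slope_measures_tendsto_pushforward (e f m l : ℕ)
    (he : 1 ≤ e) (hf : 1 ≤ f) (hm : 1 ≤ m) (hl : 1 ≤ l)
    (s : Fin e → ℝ) (s' : Fin f → ℝ)
    (Δ : Set (EuclideanSpace ℝ (Fin e)))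
    (hΔ : Δ = {x | (∀ i, 0 ≤ x i) ∧ ∑ i, x i = 1})
    (Δ' : Set (EuclideanSpace ℝ (Fin f)))
    (hΔ' : Δ' = {x | (∀ j, 0 ≤ x j) ∧ ∑ j, x j = 1})
    (η : Measure (EuclideanSpace ℝ (Fin e) × EuclideanSpace ℝ (Fin f)))
    (hη : η = (μH[(e : ℝ) + (f : ℝ) - 2] (Δ ×ˢ Δ'))⁻¹ •
      (μH[(e : ℝ) + (f : ℝ) - 2]).restrict (Δ ×ˢ Δ'))
    (ν : ℕ → Measure ℝ)
    (hν : ∀ n : ℕ, ν n =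
      (((Finset.Nat.antidiagonalTuple e (m * n)) ×ˢ
          (Finset.Nat.antidiagonalTuple f (l * n))).card : ℝ≥0∞)⁻¹ •
        ∑ p ∈ (Finset.Nat.antidiagonalTuple e (m * n)) ×ˢ
            (Finset.Nat.antidiagonalTuple f (l * n)),
          Measure.dirac
            ((∑ i, (p.1 i : ℝ) * s i + ∑ j, (p.2 j : ℝ) * s' j) / n)) :
    ∀ g : BoundedContinuousFunction ℝ ℝ,
      Tendsto (fun n : ℕ => ∫ x, g x ∂(ν n)) atTop
        (𝓝 (∫ x, g x ∂(η.map
          (fun x => (m : ℝ) * ∑ i, s i * x.1 i + (l : ℝ) * ∑ j, s' j * x.2 j)))) := by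
  intro g
  obtain ⟨d₁, rfl⟩ : ∃ d, e = d + 1 := ⟨e - 1, by omega⟩
  obtain ⟨d₂, rfl⟩ : ∃ d, f = d + 1 := ⟨f - 1, by omega⟩
  set φ := fun x : EuclideanSpace ℝ (Fin (d₁ + 1)) × EuclideanSpace ℝ (Fin (d₂ + 1)) =>
    (m : ℝ) * ∑ i, s i * x.1 i + (l : ℝ) * ∑ j, s' j * x.2 j
  have hφ : Continuous φ := by fun_prop
  have hΨ := ((simplexChart d₁).prodMap (simplexChart d₂)).continuous_of_finiteDimensional
  have hη' : η = (volume[|solidSimplex d₁ ×ˢ solidSimplex d₂]).map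
      ((simplexChart d₁).prodMap (simplexChart d₂)) := by
    rw [hη, hΔ, hΔ']
    exact hausdorffMeasure_cond_simplex_prod_eq_map d₁ d₂
  rw [hη', Measure.map_map hφ.measurable hΨ.measurable,
    integral_map (hφ.comp hΨ).aemeasurable g.continuous.aestronglyMeasurable]
  refine (tendsto_average_solidSimplexLattice (N₁ := (m * ·)) (N₂ := (l * ·))
    (g.continuous.comp (hφ.comp hΨ)) (fun y => g.norm_coe_le_norm _)
    (tendsto_id.const_mul_atTop' hm) (tendsto_id.const_mul_atTop' hl)).congr' ?_
  filter_upwards [eventually_ne_atTop 0] with n hn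
  rw [hν n, integral_inv_card_smul_sum_dirac, smul_eq_mul]
  refine (average_antidiagonalTuple_prod (mul_ne_zero (by omega) hn) (mul_ne_zero (by omega) hn)
    (g ∘ φ)).symm.trans ?_
  simp only [φ, Function.comp_apply, mul_sum_mul_gridPoint (by omega : m ≠ 0),
    mul_sum_mul_gridPoint (by omega : l ≠ 0), add_div]
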